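/- For all finite hypergraphs H1 and H2, the Cartesian product H1□H2 has the Helly property if and only if both H1 and H2 have the Helly property. -/

import Mathlib

/-!
Basic definitions: finite hypergraphs (a finite nonempty vertex set `V`, given by
`[Fintype V] [Nonempty V]`, together with a set of nonempty edges), walks, distance,
connectedness, simplicity, rank, colorings, Helly property, covers,
the various hypergraph products, 2-sections, and graph products.
-/

/-- A hypergraph on a vertex type `V`: a collection of nonempty edges (finite subsets of `V`). -/
structure Hypergraph' (V : Type*) where
  edges : Set (Finset V)
  nonempty_edges : ∀ e ∈ edges, e.Nonempty

namespace Hypergraph'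

variable {V V₁ V₂ : Type*}

/-- There is a walk of length `n` from `u` to `v`: a sequence of vertices `w 0, …, w n`
and edges `f 1, …, f n` with consecutive vertices distinct and both contained
in the corresponding edge. -/
def HasWalk (H : Hypergraph' V) (u v : V) (n : ℕ) : Prop :=
  ∃ (w : Fin (n + 1) → V) (f : Fin n → Finset V),
    w 0 = u ∧ w (Fin.last n) = v ∧
      ∀ i : Fin n, f i ∈ H.edges ∧ w i.castSucc ≠ w i.succ ∧
        w i.castSucc ∈ f i ∧ w i.succ ∈ f i

/-- The distance between two vertices: the minimum length of a walk joining them,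
`⊤ = ∞` if there is none. -/
noncomputable def dist (H : Hypergraph' V) (u v : V) : ℕ∞ :=
  sInf {x : ℕ∞ | ∃ n : ℕ, x = n ∧ H.HasWalk u v n}

/-- A hypergraph is connected if any two vertices are joined by a walk. -/
def Connected (H : Hypergraph' V) : Prop := ∀ u v : V, ∃ n, H.HasWalk u v n

/-- A hypergraph is simple if every edge has at least two vertices and
no edge is contained in another edge. -/
def Simple (H : Hypergraph' V) : Prop :=
  (∀ e ∈ H.edges, 2 ≤ e.card) ∧ ∀ e ∈ H.edges, ∀ f ∈ H.edges, e ⊆ f → e = f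

/-- A hypergraph is loopless if every edge has at least two vertices. -/
def Loopless (H : Hypergraph' V) : Prop := ∀ e ∈ H.edges, 2 ≤ e.card

/-- The rank: the maximum cardinality of an edge. -/
noncomputable def rank (H : Hypergraph' V) : ℕ := sSup (Finset.card '' H.edges)

/-- The anti-rank: the minimum cardinality of an edge. -/
noncomputable def antirank (H : Hypergraph' V) : ℕ := sInf (Finset.card '' H.edges)

/-- A proper coloring: no color class contains an edge. -/
def IsProperColoring (H : Hypergraph' V) {k : ℕ} (c : V → Fin k) : Prop :=
  ∀ e ∈ H.edges, ∀ i : Fin k, ¬ ∀ v ∈ e, c v = i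

/-- A proper strong coloring: a proper coloring in which the vertices of every
edge receive pairwise distinct colors. -/
def IsStrongColoring (H : Hypergraph' V) {k : ℕ} (c : V → Fin k) : Prop :=
  H.IsProperColoring c ∧ ∀ e ∈ H.edges, ∀ u ∈ e, ∀ v ∈ e, u ≠ v → c u ≠ c v

/-- The chromatic number: the least `k` admitting a proper `k`-coloring. -/
noncomputable def chromaticNumber (H : Hypergraph' V) : ℕ :=
  sInf {k : ℕ | ∃ c : V → Fin k, H.IsProperColoring c}

/-- The strong chromatic number: the least `k` admitting a proper strong `k`-coloring. -/
noncomputable def strongChromaticNumber (H : Hypergraph' V) : ℕ :=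
  sInf {k : ℕ | ∃ c : V → Fin k, H.IsStrongColoring c}

/-- The Helly property: every intersecting family of edges is a star. -/
def Helly (H : Hypergraph' V) : Prop :=
  ∀ E' ⊆ H.edges, (∀ e ∈ E', ∀ f ∈ E', ∃ x, x ∈ e ∧ x ∈ f) → ∃ v, ∀ e ∈ E', v ∈ e

/-- The covering number: the minimum cardinality of a set of vertices meeting every edge. -/
noncomputable def coverNumber (H : Hypergraph' V) : ℕ :=
  sInf {k : ℕ | ∃ T : Finset V, T.card = k ∧ ∀ e ∈ H.edges, ∃ v ∈ T, v ∈ e}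

/-- The Cartesian product of hypergraphs. -/
def cartProd (H₁ : Hypergraph' V₁) (H₂ : Hypergraph' V₂) : Hypergraph' (V₁ × V₂) where
  edges := {E | (∃ x, ∃ f ∈ H₂.edges, E = {x} ×ˢ f) ∨ ∃ e ∈ H₁.edges, ∃ y, E = e ×ˢ {y}}
  nonempty_edges := by
    rintro E (⟨x, f, hf, rfl⟩ | ⟨e, he, y, rfl⟩)
    · exact (Finset.singleton_nonempty x).product (H₂.nonempty_edges f hf)
    · exact (H₁.nonempty_edges e he).product (Finset.singleton_nonempty y)

section Products

variable [DecidableEq V₁] [DecidableEq V₂]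

/-- The minimal-rank-preserving direct product `H₁ ×̌ H₂`. -/
def minDirProd (H₁ : Hypergraph' V₁) (H₂ : Hypergraph' V₂) : Hypergraph' (V₁ × V₂) where
  edges := {E | ∃ e₁ ∈ H₁.edges, ∃ e₂ ∈ H₂.edges,
    E ⊆ e₁ ×ˢ e₂ ∧ E.card = min e₁.card e₂.card ∧
      (E.image Prod.fst).card = min e₁.card e₂.card ∧
      (E.image Prod.snd).card = min e₁.card e₂.card}
  nonempty_edges := by
    rintro E ⟨e₁, h₁, e₂, h₂, -, hc, -, -⟩
    rw [← Finset.card_pos, hc]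
    exact lt_min (Finset.card_pos.mpr (H₁.nonempty_edges e₁ h₁))
      (Finset.card_pos.mpr (H₂.nonempty_edges e₂ h₂))

/-- The maximal-rank-preserving direct product `H₁ ×̂ H₂`. -/
def maxDirProd (H₁ : Hypergraph' V₁) (H₂ : Hypergraph' V₂) : Hypergraph' (V₁ × V₂) where
  edges := {E | ∃ e₁ ∈ H₁.edges, ∃ e₂ ∈ H₂.edges,
    E ⊆ e₁ ×ˢ e₂ ∧ E.card = max e₁.card e₂.card ∧
      E.image Prod.fst = e₁ ∧ E.image Prod.snd = e₂}
  nonempty_edges := by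
    rintro E ⟨e₁, h₁, e₂, h₂, -, hc, -, -⟩
    rw [← Finset.card_pos, hc]
    exact lt_max_iff.mpr (Or.inl (Finset.card_pos.mpr (H₁.nonempty_edges e₁ h₁)))

/-- The non-rank-preserving direct product `H₁ ×̃ H₂`. -/
def nrDirProd (H₁ : Hypergraph' V₁) (H₂ : Hypergraph' V₂) : Hypergraph' (V₁ × V₂) where
  edges := {E | ∃ e ∈ H₁.edges, ∃ f ∈ H₂.edges, ∃ x ∈ e, ∃ y ∈ f,
    E = insert (x, y) ((e.erase x) ×ˢ (f.erase y))}
  nonempty_edges := by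
    rintro E ⟨e, -, f, -, x, -, y, -, rfl⟩
    exact Finset.insert_nonempty _ _

/-- The normal product `H₁ ⊠̌ H₂`: union of the Cartesian product edges and the
minimal-rank-preserving direct product edges. -/
def normalProd (H₁ : Hypergraph' V₁) (H₂ : Hypergraph' V₂) : Hypergraph' (V₁ × V₂) where
  edges := (H₁.cartProd H₂).edges ∪ (H₁.minDirProd H₂).edges
  nonempty_edges := by
    rintro E (h | h)
    · exact (H₁.cartProd H₂).nonempty_edges E h
    · exact (H₁.minDirProd H₂).nonempty_edges E h

/-- The strong product `H₁ ⊠̂ H₂`: union of the Cartesian product edges and the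
maximal-rank-preserving direct product edges. -/
def strongProd (H₁ : Hypergraph' V₁) (H₂ : Hypergraph' V₂) : Hypergraph' (V₁ × V₂) where
  edges := (H₁.cartProd H₂).edges ∪ (H₁.maxDirProd H₂).edges
  nonempty_edges := by
    rintro E (h | h)
    · exact (H₁.cartProd H₂).nonempty_edges E h
    · exact (H₁.maxDirProd H₂).nonempty_edges E h

/-- The lexicographic product `H₁ ∘ H₂`. -/
def lexProd (H₁ : Hypergraph' V₁) (H₂ : Hypergraph' V₂) : Hypergraph' (V₁ × V₂) where
  edges := {E | (E.image Prod.fst ∈ H₁.edges ∧ (E.image Prod.fst).card = E.card) ∨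
    ∃ x, ∃ e₂ ∈ H₂.edges, E = {x} ×ˢ e₂}
  nonempty_edges := by
    rintro E (⟨h₁, hc⟩ | ⟨x, e₂, h₂, rfl⟩)
    · rw [← Finset.card_pos, ← hc]
      exact Finset.card_pos.mpr (H₁.nonempty_edges _ h₁)
    · exact (Finset.singleton_nonempty x).product (H₂.nonempty_edges e₂ h₂)

end Products

/-- The square product `H₁ ■ H₂`. -/
def squareProd (H₁ : Hypergraph' V₁) (H₂ : Hypergraph' V₂) : Hypergraph' (V₁ × V₂) where
  edges := {E | ∃ e₁ ∈ H₁.edges, ∃ e₂ ∈ H₂.edges, E = e₁ ×ˢ e₂}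
  nonempty_edges := by
    rintro E ⟨e₁, h₁, e₂, h₂, rfl⟩
    exact (H₁.nonempty_edges e₁ h₁).product (H₂.nonempty_edges e₂ h₂)

/-- The 2-section of a hypergraph: distinct vertices are adjacent iff they lie
in a common edge. -/
def twoSection (H : Hypergraph' V) : SimpleGraph V where
  Adj x y := x ≠ y ∧ ∃ e ∈ H.edges, x ∈ e ∧ y ∈ e
  symm := by refine ⟨?_⟩; rintro x y ⟨hxy, e, he, hx, hy⟩; exact ⟨hxy.symm, e, he, hy, hx⟩
  loopless := by refine ⟨?_⟩; rintro x ⟨hx, -⟩; exact hx rfl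

end Hypergraph'

namespace SimpleGraph

variable {V₁ V₂ : Type*}

/-- The direct (tensor) product of simple graphs. -/
def directProd (G₁ : SimpleGraph V₁) (G₂ : SimpleGraph V₂) : SimpleGraph (V₁ × V₂) where
  Adj x y := G₁.Adj x.1 y.1 ∧ G₂.Adj x.2 y.2
  symm := ⟨fun _ _ ⟨h₁, h₂⟩ => ⟨h₁.symm, h₂.symm⟩⟩
  loopless := ⟨fun x h => G₁.loopless.irrefl x.1 h.1⟩

/-- The strong product of simple graphs. -/
def strongGraphProd (G₁ : SimpleGraph V₁) (G₂ : SimpleGraph V₂) : SimpleGraph (V₁ × V₂) where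
  Adj x y := x ≠ y ∧ ((x.1 = y.1 ∧ G₂.Adj x.2 y.2) ∨ (x.2 = y.2 ∧ G₁.Adj x.1 y.1) ∨
    (G₁.Adj x.1 y.1 ∧ G₂.Adj x.2 y.2))
  symm := by
    refine ⟨?_⟩
    rintro x y ⟨hne, (⟨h, h'⟩ | ⟨h, h'⟩ | ⟨h, h'⟩)⟩
    · exact ⟨hne.symm, Or.inl ⟨h.symm, h'.symm⟩⟩
    · exact ⟨hne.symm, Or.inr (Or.inl ⟨h.symm, h'.symm⟩)⟩
    · exact ⟨hne.symm, Or.inr (Or.inr ⟨h.symm, h'.symm⟩)⟩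
  loopless := by refine ⟨?_⟩; rintro x ⟨hx, -⟩; exact hx rfl

/-- The lexicographic product of simple graphs. -/
def lexGraphProd (G₁ : SimpleGraph V₁) (G₂ : SimpleGraph V₂) : SimpleGraph (V₁ × V₂) where
  Adj x y := G₁.Adj x.1 y.1 ∨ (x.1 = y.1 ∧ G₂.Adj x.2 y.2)
  symm := by
    refine ⟨?_⟩
    rintro x y (h | ⟨h, h'⟩)
    · exact Or.inl h.symm
    · exact Or.inr ⟨h.symm, h'.symm⟩
  loopless := by
    refine ⟨?_⟩
    rintro x (h | ⟨-, h⟩)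
    · exact G₁.loopless.irrefl x.1 h
    · exact G₂.loopless.irrefl x.2 h

end SimpleGraph

/-
The edges of `H₁ □ H₂` are rectangles `{x} ×ˢ f` and `e ×ˢ {y}`. An intersecting family of them
projects under `Prod.fst` to an intersecting family of edges of `H₁` and singletons, which has a
common vertex `p₁` as soon as `H₁` is Helly; likewise under `Prod.snd` with a common vertex `p₂`,
and then `(p₁, p₂)` lies in every rectangle of the family. Conversely, each factor embeds into the
product as a layer `V₁ × {y}` or `{x} × V₂`, and the Helly property passes to such layers.
-/

namespace Hypergraph'

variable {V W V₁ V₂ : Type*}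

theorem Helly.nonempty {H : Hypergraph' V} (hH : H.Helly) : Nonempty V :=
  let ⟨v, _⟩ := hH ∅ (Set.empty_subset _) (by simp)
  ⟨v⟩

theorem Helly.of_map {H : Hypergraph' V} {H' : Hypergraph' W} (hH' : H'.Helly) (s : V ↪ W)
    {π : W → V} (hπ : Function.LeftInverse π s) (hs : ∀ e ∈ H.edges, e.map s ∈ H'.edges) :
    H.Helly := by
  intro E' hE' hint
  obtain ⟨w, hw⟩ := hH' ((·.map s) '' E') (by rintro _ ⟨e, he, rfl⟩; exact hs e (hE' he))
    (by
      rintro _ ⟨e, he, rfl⟩ _ ⟨f, hf, rfl⟩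
      obtain ⟨x, hxe, hxf⟩ := hint e he f hf
      exact ⟨s x, Finset.mem_map_of_mem s hxe, Finset.mem_map_of_mem s hxf⟩)
  refine ⟨π w, fun e he => ?_⟩
  obtain ⟨x, hx, rfl⟩ := Finset.mem_map.mp (hw _ ⟨e, he, rfl⟩)
  rwa [hπ x]

def withSingletons (H : Hypergraph' V) : Hypergraph' V where
  edges := H.edges ∪ Set.range singleton
  nonempty_edges := by
    rintro e (he | ⟨x, rfl⟩)
    · exact H.nonempty_edges e he
    · exact Finset.singleton_nonempty x

theorem Helly.withSingletons {H : Hypergraph' V} (hH : H.Helly) : H.withSingletons.Helly := by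
  intro E' hE' hint
  by_cases hsingle : ∃ x, {x} ∈ E'
  · obtain ⟨x, hx⟩ := hsingle
    refine ⟨x, fun e he => ?_⟩
    obtain ⟨y, hy, hye⟩ := hint _ hx e he
    rwa [Finset.mem_singleton.mp hy] at hye
  · refine hH E' (fun e he => ?_) hint
    rcases hE' he with he' | ⟨x, rfl⟩
    · exact he'
    · exact absurd ⟨x, he⟩ hsingle

theorem Helly.exists_forall_mem_image [DecidableEq V] {H : Hypergraph' V} (hH : H.Helly)
    {𝓔 : Set (Finset W)} (hint : ∀ F ∈ 𝓔, ∀ G ∈ 𝓔, ∃ w, w ∈ F ∧ w ∈ G) (π : W → V)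
    (hπ : ∀ F ∈ 𝓔, F.image π ∈ H.edges) : ∃ p, ∀ F ∈ 𝓔, p ∈ F.image π := by
  obtain ⟨p, hp⟩ := hH ((·.image π) '' 𝓔) (by rintro _ ⟨F, hF, rfl⟩; exact hπ F hF)
    (by
      rintro _ ⟨F, hF, rfl⟩ _ ⟨G, hG, rfl⟩
      obtain ⟨w, hwF, hwG⟩ := hint F hF G hG
      exact ⟨π w, Finset.mem_image_of_mem π hwF, Finset.mem_image_of_mem π hwG⟩)
  exact ⟨p, fun F hF => hp _ ⟨F, hF, rfl⟩⟩

theorem image_fst_mem_withSingletons [DecidableEq V₁] {H₁ : Hypergraph' V₁}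
    {H₂ : Hypergraph' V₂} {F : Finset (V₁ × V₂)} (hF : F ∈ (H₁.cartProd H₂).edges) :
    F.image Prod.fst ∈ H₁.withSingletons.edges := by
  rcases hF with ⟨x, f, hf, rfl⟩ | ⟨e, he, y, rfl⟩
  · exact Or.inr ⟨x, (Finset.product_image_fst (s := {x}) (H₂.nonempty_edges f hf)).symm⟩
  · rw [Finset.product_image_fst (Finset.singleton_nonempty y)]
    exact Or.inl he

theorem image_snd_mem_withSingletons [DecidableEq V₂] {H₁ : Hypergraph' V₁}
    {H₂ : Hypergraph' V₂} {F : Finset (V₁ × V₂)} (hF : F ∈ (H₁.cartProd H₂).edges) :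
    F.image Prod.snd ∈ H₂.withSingletons.edges := by
  rcases hF with ⟨x, f, hf, rfl⟩ | ⟨e, he, y, rfl⟩
  · rw [Finset.product_image_snd (Finset.singleton_nonempty x)]
    exact Or.inl hf
  · exact Or.inr ⟨y, (Finset.product_image_snd (t := {y}) (H₁.nonempty_edges e he)).symm⟩

theorem mk_mem_of_mem_cartProd_edges [DecidableEq V₁] [DecidableEq V₂] {H₁ : Hypergraph' V₁}
    {H₂ : Hypergraph' V₂} {F : Finset (V₁ × V₂)} (hF : F ∈ (H₁.cartProd H₂).edges) {p₁ : V₁}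
    {p₂ : V₂} (hp₁ : p₁ ∈ F.image Prod.fst) (hp₂ : p₂ ∈ F.image Prod.snd) : (p₁, p₂) ∈ F := by
  rcases hF with ⟨x, f, -, rfl⟩ | ⟨e, -, y, rfl⟩ <;>
    exact Finset.mem_product.mpr ⟨Finset.subset_product_image_fst hp₁,
      Finset.subset_product_image_snd hp₂⟩

end Hypergraph'

theorem helly_cartProd_iff_general {V₁ V₂ : Type*} (H₁ : Hypergraph' V₁) (H₂ : Hypergraph' V₂) :
    (H₁.cartProd H₂).Helly ↔ H₁.Helly ∧ H₂.Helly := by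
  classical
  constructor
  · intro h
    obtain ⟨x, y⟩ := h.nonempty
    refine ⟨h.of_map (.sectL V₁ y) (π := Prod.fst) (fun _ => rfl) fun e he => ?_,
      h.of_map (.sectR x V₂) (π := Prod.snd) (fun _ => rfl) fun f hf => ?_⟩
    · exact Or.inr ⟨e, he, y, Finset.product_singleton.symm⟩
    · exact Or.inl ⟨x, f, hf, Finset.singleton_product.symm⟩
  · rintro ⟨h₁, h₂⟩ E' hE' hint
    obtain ⟨p₁, hp₁⟩ := h₁.withSingletons.exists_forall_mem_image hint Prod.fst
      fun F hF => Hypergraph'.image_fst_mem_withSingletons (hE' hF)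
    obtain ⟨p₂, hp₂⟩ := h₂.withSingletons.exists_forall_mem_image hint Prod.snd
      fun F hF => Hypergraph'.image_snd_mem_withSingletons (hE' hF)
    exact ⟨(p₁, p₂), fun F hF =>
      Hypergraph'.mk_mem_of_mem_cartProd_edges (hE' hF) (hp₁ F hF) (hp₂ F hF)⟩

/-- the Cartesian product has the Helly property iff both factors do. -/
theorem helly_cartProd_iff {V₁ V₂ : Type*} [Fintype V₁] [Nonempty V₁]
    [Fintype V₂] [Nonempty V₂] (H₁ : Hypergraph' V₁) (H₂ : Hypergraph' V₂) :
    (H₁.cartProd H₂).Helly ↔ H₁.Helly ∧ H₂.Helly :=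
  helly_cartProd_iff_general H₁ H₂
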